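/- (Theorem 2.) An incompatibility measure ψ : P* → ℝ^A satisfies 'same cost—same incompatibility', 'allocation of incompatibility', and 'anonymity' if and only if it coincides with the Shapley incompatibility measure: for every a ∈ A and p ∈ P*, ψ_a(p) = Σ_{S ⊆ A ∖ {a}} (|S|! (J − |S| − 1)! / J!) · (p_S − p_{S ∪ {a}}). -/

import Mathlib

open Finset

variable {A : Type*} [Fintype A] [DecidableEq A]

/-- `p` restricted to nonempty subsets belongs to the set `P` of consistent collections. -/
def memP (p : Finset A → ℝ) : Prop :=
  ∃ π : Finset A → ℝ, (∀ W, 0 ≤ π W) ∧ (∑ W : Finset A, π W = 1) ∧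
    ∀ S : Finset A, S.Nonempty →
      p S = ∑ W ∈ Finset.univ.filter (fun W : Finset A => S ⊆ W), π W

/-- `p ∈ P*`: `p ∅ = 1` and the restriction of `p` to nonempty subsets lies in `P`. -/
def memPStar (p : Finset A → ℝ) : Prop :=
  p ∅ = 1 ∧ memP p

/-- The Shapley incompatibility measure:
`φ_a(p) = Σ_{S ⊆ A∖{a}} (|S|!(J−|S|−1)!/J!) (p_S − p_{S∪{a}})`. -/
noncomputable def shapley (p : Finset A → ℝ) (a : A) : ℝ :=
  ∑ S ∈ ((Finset.univ : Finset A).erase a).powerset,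
    ((S.card.factorial * (Fintype.card A - S.card - 1).factorial : ℝ) /
        (Fintype.card A).factorial) * (p S - p (insert a S))

/-- *Same cost—same incompatibility*. -/
def SameCost (ψ : (Finset A → ℝ) → A → ℝ) : Prop :=
  ∀ p p', memPStar p → memPStar p' → ∀ a : A,
    (∀ S ∈ ((Finset.univ : Finset A).erase a).powerset,
      p S - p (insert a S) = p' S - p' (insert a S)) →
    ψ p a = ψ p' a

/-- *Allocation of incompatibility*: `Σ_a ψ_a(p) = 1 − p_A`. -/
def Allocation (ψ : (Finset A → ℝ) → A → ℝ) : Prop :=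
  ∀ p, memPStar p → ∑ a : A, ψ p a = 1 - p Finset.univ

/-- *Anonymity*: `ψ_a(p^π) = ψ_{π(a)}(p)` where `p^π_S = p_{π(S)}`. -/
def Anonymity (ψ : (Finset A → ℝ) → A → ℝ) : Prop :=
  ∀ π : Equiv.Perm A, ∀ p, memPStar p → ∀ a : A,
    ψ (fun S => p (S.image π)) a = ψ p (π a)


/-!
Write `p ∈ P*` as `p_S = ∑_{W ⊇ S} μ_W` for a probability vector `μ` on worlds. The cost
`p_S - p_{S ∪ {b}}` only sees the mass of the worlds avoiding `b`, so moving the mass of all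
worlds containing `b` onto the full world changes neither `ψ_b` nor `φ_b`, and strictly shrinks
the proper support `{W ≠ A | μ_W ≠ 0}` when `b` lies in one of its members. By induction on the
size of the proper support, `ψ_b = φ_b` for every such `b`. The other axioms lie in no proper
support set, so swapping two of them fixes `μ`, hence `p`: by anonymity `ψ` and `φ` are constant
on them, and allocation, which `φ` satisfies because the Shapley weights telescope, forces
`ψ = φ` there too.
-/

def supsetSum (μ : Finset A → ℝ) (S : Finset A) : ℝ :=
  ∑ W ∈ univ.filter (S ⊆ ·), μ W

theorem memPStar_iff {p : Finset A → ℝ} :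
    memPStar p ↔ ∃ μ ∈ stdSimplex ℝ (Finset A), p = supsetSum μ := by
  constructor
  · rintro ⟨hp_empty, μ, hμ_nonneg, hμ_sum, hp⟩
    refine ⟨μ, ⟨hμ_nonneg, hμ_sum⟩, funext fun S => ?_⟩
    rcases S.eq_empty_or_nonempty with rfl | hS
    · simp [supsetSum, hp_empty, hμ_sum]
    · exact hp S hS
  · rintro ⟨μ, ⟨hμ_nonneg, hμ_sum⟩, rfl⟩
    exact ⟨by simp [supsetSum, hμ_sum], μ, hμ_nonneg, hμ_sum, fun S _ => rfl⟩

theorem supsetSum_sub_supsetSum_insert (μ : Finset A → ℝ) (a : A) (S : Finset A) :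
    supsetSum μ S - supsetSum μ (insert a S)
      = ∑ W ∈ univ.filter (fun W => S ⊆ W ∧ a ∉ W), μ W := by
  rw [sub_eq_iff_eq_add', supsetSum, supsetSum,
    ← sum_filter_add_sum_filter_not (univ.filter (S ⊆ ·)) (a ∈ ·), filter_filter, filter_filter]
  simp only [insert_subset_iff, and_comm]

theorem supsetSum_image_perm (μ : Finset A → ℝ) (σ : Equiv.Perm A) (S : Finset A) :
    supsetSum μ (S.image σ) = supsetSum (fun W => μ (W.image σ)) S := by
  simp only [supsetSum, sum_filter]
  refine (Fintype.sum_equiv σ.finsetCongr _ _ fun W => ?_).symm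
  simp [map_eq_image, image_subset_image_iff σ.injective]

theorem memPStar_image_perm {p : Finset A → ℝ} (hp : memPStar p) (σ : Equiv.Perm A) :
    memPStar (fun S => p (S.image σ)) := by
  obtain ⟨μ, ⟨hμ_nonneg, hμ_sum⟩, rfl⟩ := memPStar_iff.1 hp
  refine memPStar_iff.2 ⟨fun W => μ (W.image σ), ⟨fun W => hμ_nonneg _, ?_⟩,
    funext (supsetSum_image_perm μ σ)⟩
  rw [← hμ_sum]
  exact Fintype.sum_equiv σ.finsetCongr _ _ fun W => by simp [map_eq_image]

theorem powerset_univ_erase (a : A) :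
    (univ.erase a).powerset = univ.filter (a ∉ ·) := by
  ext S
  simp [subset_erase]

theorem shapley_congr {p p' : Finset A → ℝ} {a : A}
    (h : ∀ S ∈ (univ.erase a).powerset, p S - p (insert a S) = p' S - p' (insert a S)) :
    shapley p a = shapley p' a :=
  sum_congr rfl fun S hS => by rw [h S hS]

theorem shapley_image_perm (p : Finset A → ℝ) (σ : Equiv.Perm A) (a : A) :
    shapley (fun S => p (S.image σ)) a = shapley p (σ a) := by
  simp only [shapley, powerset_univ_erase, sum_filter]
  refine Fintype.sum_equiv σ.finsetCongr _ _ fun S => ?_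
  simp [map_eq_image, card_image_of_injective _ σ.injective, image_insert]

noncomputable def shapleyCoeff (J s : ℕ) : ℝ :=
  (s.factorial * (J - s - 1).factorial : ℝ) / J.factorial

theorem sub_mul_shapleyCoeff {J s : ℕ} (hs : s ≤ J) :
    ((J - s : ℕ) : ℝ) * shapleyCoeff J s
      = (s.factorial * (J - s).factorial : ℝ) / J.factorial - if s = J then 1 else 0 := by
  have hJ : (J.factorial : ℝ) ≠ 0 := by positivity
  rcases hs.eq_or_lt with rfl | hlt
  · simp [hJ]
  · rw [if_neg hlt.ne, shapleyCoeff, ← Nat.mul_factorial_pred (Nat.sub_ne_zero_of_lt hlt)]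
    push_cast
    ring

theorem mul_shapleyCoeff_pred {J s : ℕ} (hs : s ≤ J) :
    (s : ℝ) * shapleyCoeff J (s - 1)
      = (s.factorial * (J - s).factorial : ℝ) / J.factorial - if s = 0 then 1 else 0 := by
  have hJ : (J.factorial : ℝ) ≠ 0 := by positivity
  rcases Nat.eq_zero_or_pos s with rfl | hpos
  · simp [hJ]
  · rw [if_neg hpos.ne', shapleyCoeff, show J - (s - 1) - 1 = J - s by omega,
      ← Nat.mul_factorial_pred hpos.ne']
    push_cast
    ring

theorem shapley_eq_sub (p : Finset A → ℝ) (a : A) :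
    shapley p a = ∑ S ∈ univ.filter (a ∉ ·), shapleyCoeff (Fintype.card A) #S * p S
      - ∑ T ∈ univ.filter (a ∈ ·), shapleyCoeff (Fintype.card A) (#T - 1) * p T := by
  have h_insert : ∑ S ∈ univ.filter (a ∉ ·), shapleyCoeff (Fintype.card A) #S * p (insert a S)
      = ∑ T ∈ univ.filter (a ∈ ·), shapleyCoeff (Fintype.card A) (#T - 1) * p T := by
    refine sum_nbij' (insert a) (erase · a) (by simp) (by simp) ?_ ?_ ?_ <;>
      intro S hS <;> simp only [mem_filter, mem_univ, true_and] at hS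
    · exact erase_insert hS
    · exact insert_erase hS
    · rw [card_insert_of_notMem hS, Nat.add_sub_cancel]
  rw [← h_insert, ← sum_sub_distrib, shapley, powerset_univ_erase]
  exact sum_congr rfl fun S _ => by rw [shapleyCoeff, mul_sub]

theorem sum_shapley (p : Finset A → ℝ) : ∑ a, shapley p a = p ∅ - p univ := by
  set J := Fintype.card A
  set w : Finset A → ℝ := fun S => ((#S).factorial * (J - #S).factorial : ℝ) / J.factorial
  have h_out : ∑ a, ∑ S ∈ univ.filter (a ∉ ·), shapleyCoeff J #S * p S
      = ∑ S, w S * p S - p univ := by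
    rw [sum_comm' (t' := univ) (s' := fun S => Sᶜ) (by simp)]
    calc _ = ∑ S, (w S * p S - if S = univ then p S else 0) := sum_congr rfl fun S _ => by
          rw [sum_const, card_compl, nsmul_eq_mul, ← mul_assoc,
            sub_mul_shapleyCoeff (card_le_univ S)]
          simp only [card_eq_iff_eq_univ]
          split_ifs <;> ring
      _ = _ := by simp [sum_sub_distrib]
  have h_in : ∑ a, ∑ T ∈ univ.filter (a ∈ ·), shapleyCoeff J (#T - 1) * p T
      = ∑ S, w S * p S - p ∅ := by
    rw [sum_comm' (t' := univ) (s' := id) (by simp)]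
    calc _ = ∑ S, (w S * p S - if S = ∅ then p S else 0) := sum_congr rfl fun S _ => by
          rw [id, sum_const, nsmul_eq_mul, ← mul_assoc,
            mul_shapleyCoeff_pred (card_le_univ S)]
          simp only [card_eq_zero]
          split_ifs <;> ring
      _ = _ := by simp [sum_sub_distrib]
  rw [sum_congr rfl fun a _ => shapley_eq_sub p a, sum_sub_distrib, h_out, h_in]
  ring

theorem eq_of_sum_eq_of_eqOn_of_const {M : Type*} [AddCommGroup M] [IsAddTorsionFree M]
    {f g : A → M} {U : Finset A} (hsum : ∑ x, f x = ∑ x, g x) (hU : ∀ x ∈ U, f x = g x)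
    (hf : ∀ x ∉ U, ∀ y ∉ U, f x = f y) (hg : ∀ x ∉ U, ∀ y ∉ U, g x = g y) : f = g := by
  funext a
  by_cases ha : a ∈ U
  · exact hU a ha
  have h_split : ∀ h : A → M, (∀ x ∉ U, ∀ y ∉ U, h x = h y) →
      ∑ x, h x = ∑ x ∈ U, h x + #Uᶜ • h a := fun h hh => by
    rw [← sum_add_sum_compl U, sum_congr rfl fun x hx => hh x (mem_compl.1 hx) a ha, sum_const]
  rw [h_split f hf, h_split g hg, sum_congr rfl hU, add_right_inj] at hsum
  exact nsmul_right_injective (card_ne_zero_of_mem (mem_compl.2 ha)) hsum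

noncomputable def properSupport (μ : Finset A → ℝ) : Finset (Finset A) :=
  univ.filter fun W => W ≠ univ ∧ μ W ≠ 0

theorem mem_properSupport {μ : Finset A → ℝ} {W : Finset A} :
    W ∈ properSupport μ ↔ W ≠ univ ∧ μ W ≠ 0 := by
  simp [properSupport]

theorem comp_image_eq_self {μ : Finset A → ℝ} {σ : Equiv.Perm A}
    (hσ : ∀ W ∈ properSupport μ, ∀ x ∈ W, σ x = x) : (fun W => μ (W.image σ)) = μ := by
  funext W
  by_cases hW : W = univ
  · rw [hW, image_univ_equiv]
  by_cases h_fix : ∀ x ∈ W, σ x = x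
  · rw [image_congr h_fix, image_id']
  push Not at h_fix
  obtain ⟨x, hxW, hx⟩ := h_fix
  have hW_zero : μ W = 0 := by
    by_contra h
    exact hx (hσ W (mem_properSupport.2 ⟨hW, h⟩) x hxW)
  have hσW_ne : W.image σ ≠ univ := fun h =>
    hW (by rw [← card_eq_iff_eq_univ, ← card_image_of_injective W σ.injective, h, card_univ])
  have hσW_zero : μ (W.image σ) = 0 := by
    by_contra h
    exact hx (σ.injective (hσ _ (mem_properSupport.2 ⟨hσW_ne, h⟩) _ (mem_image_of_mem σ hxW)))
  rw [hW_zero, hσW_zero]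

def pushToUniv (μ : Finset A → ℝ) (b : A) (W : Finset A) : ℝ :=
  if b ∉ W then μ W else if W = univ then ∑ V ∈ univ.filter (b ∈ ·), μ V else 0

theorem pushToUniv_of_notMem (μ : Finset A → ℝ) {b : A} {W : Finset A} (h : b ∉ W) :
    pushToUniv μ b W = μ W :=
  if_pos h

theorem pushToUniv_of_mem (μ : Finset A → ℝ) {b : A} {W : Finset A} (h : b ∈ W) :
    pushToUniv μ b W = if W = univ then ∑ V ∈ univ.filter (b ∈ ·), μ V else 0 :=
  if_neg (not_not.2 h)

theorem pushToUniv_mem_stdSimplex {μ : Finset A → ℝ} (hμ : μ ∈ stdSimplex ℝ (Finset A)) (b : A) :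
    pushToUniv μ b ∈ stdSimplex ℝ (Finset A) := by
  obtain ⟨hμ_nonneg, hμ_sum⟩ := hμ
  refine ⟨fun W => ?_, ?_⟩
  · unfold pushToUniv
    split_ifs
    exacts [sum_nonneg fun V _ => hμ_nonneg V, le_rfl, hμ_nonneg W]
  · rw [← hμ_sum, ← sum_filter_add_sum_filter_not univ (b ∈ ·),
      ← sum_filter_add_sum_filter_not univ (b ∈ ·) μ]
    congr 1
    · rw [sum_congr rfl fun W hW => pushToUniv_of_mem μ (mem_filter.1 hW).2, sum_ite_eq']
      simp
    · exact sum_congr rfl fun W hW => pushToUniv_of_notMem μ (mem_filter.1 hW).2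

theorem supsetSum_pushToUniv_sub (μ : Finset A → ℝ) (b : A) (S : Finset A) :
    supsetSum (pushToUniv μ b) S - supsetSum (pushToUniv μ b) (insert b S)
      = supsetSum μ S - supsetSum μ (insert b S) := by
  simp only [supsetSum_sub_supsetSum_insert]
  exact sum_congr rfl fun W hW => pushToUniv_of_notMem μ (mem_filter.1 hW).2.2

theorem properSupport_pushToUniv_ssubset {μ : Finset A → ℝ} {b : A} {W₀ : Finset A}
    (hW₀ : W₀ ∈ properSupport μ) (hb : b ∈ W₀) :
    properSupport (pushToUniv μ b) ⊂ properSupport μ := by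
  refine (ssubset_iff_of_subset fun W hW => ?_).2 ⟨W₀, hW₀, fun h => ?_⟩
  · obtain ⟨hW_ne, hW_mass⟩ := mem_properSupport.1 hW
    by_cases hbW : b ∈ W
    · simp [pushToUniv_of_mem μ hbW, hW_ne] at hW_mass
    · exact mem_properSupport.2 ⟨hW_ne, pushToUniv_of_notMem μ hbW ▸ hW_mass⟩
  · obtain ⟨hW₀_ne, hW₀_mass⟩ := mem_properSupport.1 h
    simp [pushToUniv_of_mem μ hb, hW₀_ne] at hW₀_mass

theorem eq_shapley_supsetSum {ψ : (Finset A → ℝ) → A → ℝ}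
    (hSC : SameCost ψ) (hAl : Allocation ψ) (hAn : Anonymity ψ)
    {μ : Finset A → ℝ} (hμ : μ ∈ stdSimplex ℝ (Finset A)) :
    ψ (supsetSum μ) = shapley (supsetSum μ) := by
  induction hn : #(properSupport μ) using Nat.strong_induction_on generalizing μ with
  | _ n ih =>
  have hp : memPStar (supsetSum μ) := memPStar_iff.2 ⟨μ, hμ, rfl⟩
  set U := univ.filter fun b => ∃ W ∈ properSupport μ, b ∈ W
  have h_support : ∀ b ∈ U, ψ (supsetSum μ) b = shapley (supsetSum μ) b := by
    intro b hb
    obtain ⟨W, hW, hbW⟩ := (mem_filter.1 hb).2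
    have hμ' := pushToUniv_mem_stdSimplex hμ b
    have h_marg : ∀ S ∈ (univ.erase b).powerset, supsetSum μ S - supsetSum μ (insert b S)
        = supsetSum (pushToUniv μ b) S - supsetSum (pushToUniv μ b) (insert b S) :=
      fun S _ => (supsetSum_pushToUniv_sub μ b S).symm
    rw [hSC _ _ hp (memPStar_iff.2 ⟨_, hμ', rfl⟩) b h_marg, shapley_congr h_marg,
      ih _ (hn ▸ card_lt_card (properSupport_pushToUniv_ssubset hW hbW)) hμ' rfl]
  have h_swap : ∀ x ∉ U, ∀ y ∉ U,
      (fun S => supsetSum μ (S.image (Equiv.swap x y))) = supsetSum μ := by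
    intro x hx y hy
    have h_outside : ∀ z ∉ U, ∀ W ∈ properSupport μ, ∀ w ∈ W, w ≠ z := by
      rintro z hz W hW w hw rfl
      exact hz (mem_filter.2 ⟨mem_univ _, W, hW, hw⟩)
    have h_inv := comp_image_eq_self fun W hW w hw =>
      Equiv.swap_apply_of_ne_of_ne (h_outside x hx W hW w hw) (h_outside y hy W hW w hw)
    simp only [supsetSum_image_perm, h_inv]
  refine eq_of_sum_eq_of_eqOn_of_const ?_ h_support (fun x hx y hy => ?_) (fun x hx y hy => ?_)
  · rw [hAl _ hp, sum_shapley, hp.1]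
  · simpa [h_swap x hx y hy] using hAn (Equiv.swap x y) _ hp x
  · simpa [h_swap x hx y hy] using shapley_image_perm (supsetSum μ) (Equiv.swap x y) x

theorem theorem2_general (ψ : (Finset A → ℝ) → A → ℝ) :
    (SameCost ψ ∧ Allocation ψ ∧ Anonymity ψ) ↔
      ∀ p, memPStar p → ∀ a : A, ψ p a = shapley p a := by
  constructor
  · rintro ⟨hSC, hAl, hAn⟩ p hp a
    obtain ⟨μ, hμ, rfl⟩ := memPStar_iff.1 hp
    exact congrFun (eq_shapley_supsetSum hSC hAl hAn hμ) a
  · intro h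
    refine ⟨fun p p' hp hp' a h_marg => ?_, fun p hp => ?_, fun σ p hp a => ?_⟩
    · rw [h p hp, h p' hp']
      exact shapley_congr h_marg
    · rw [sum_congr rfl fun a _ => h p hp a, sum_shapley, hp.1]
    · rw [h p hp, h _ (memPStar_image_perm hp σ)]
      exact shapley_image_perm p σ a

/-- Theorem 2: an incompatibility measure satisfies *same cost—same incompatibility*,
*allocation of incompatibility* and *anonymity* iff it coincides with the Shapley
incompatibility measure on `P*`. -/
theorem theorem2 (hJ : 1 ≤ Fintype.card A) (ψ : (Finset A → ℝ) → A → ℝ) :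
    (SameCost ψ ∧ Allocation ψ ∧ Anonymity ψ) ↔
      ∀ p, memPStar p → ∀ a : A, ψ p a = shapley p a :=
  theorem2_general ψ
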